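/- arXiv:2402.10246 — 3 statements merged into one kernel-verified Lean document; each statement's English description precedes it below -/
import Mathlib

section
/- The sequence R defined by R(0)=0, R(1)=1, and n·R(n) = R(n-2) + (n-1)·R(n-1) for n ≥ 2 satisfies the closed form R(n) = 1 − Σ_{k=0}^{n} (−1)^k / k! for all n ≥ 0. -/
/-!
Writing `t k = (-1)^k / k!`, we have `(n + 1) t (n + 1) = -t n`, and this is exactly what makes
`n ↦ 1 - ∑_{k ≤ n} t k` satisfy the recurrence `n R(n) = R(n - 2) + (n - 1) R(n - 1)`. Since the
leading coefficient `n` is invertible for `n ≥ 2`, a solution is determined by `R 0` and `R 1`.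
-/

open Finset

section

variable {K : Type*} [Field K] [CharZero K]

theorem eq_of_two_step_recurrence {a b : ℕ → K} (h0 : a 0 = b 0) (h1 : a 1 = b 1)
    (ha : ∀ n : ℕ, (n + 2 : K) * a (n + 2) = a n + (n + 1) * a (n + 1))
    (hb : ∀ n : ℕ, (n + 2 : K) * b (n + 2) = b n + (n + 1) * b (n + 1)) :
    a = b := by
  have hpair : ∀ n, a n = b n ∧ a (n + 1) = b (n + 1) := by
    intro n
    induction n with
    | zero => exact ⟨h0, h1⟩
    | succ n ih =>
      have hn : (n + 2 : K) ≠ 0 := by exact_mod_cast (n + 1).succ_ne_zero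
      refine ⟨ih.2, mul_left_cancel₀ hn ?_⟩
      rw [ha, hb, ih.1, ih.2]
  exact funext fun n => (hpair n).1

theorem succ_mul_neg_one_pow_div_factorial_succ (n : ℕ) :
    (n + 1 : K) * ((-1) ^ (n + 1) / (n + 1).factorial) = -((-1 : K) ^ n / n.factorial) := by
  rw [Nat.factorial_succ, Nat.cast_mul, pow_succ]
  field_simp
  push_cast
  ring

theorem one_sub_sum_neg_one_pow_div_factorial_recurrence (n : ℕ) :
    (n + 2 : K) * (1 - ∑ k ∈ range (n + 2 + 1), (-1 : K) ^ k / k.factorial) =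
      (1 - ∑ k ∈ range (n + 1), (-1 : K) ^ k / k.factorial) +
        (n + 1) * (1 - ∑ k ∈ range (n + 1 + 1), (-1 : K) ^ k / k.factorial) := by
  have key := succ_mul_neg_one_pow_div_factorial_succ (K := K) (n + 1)
  push_cast at key
  rw [sum_range_succ _ (n + 2), sum_range_succ _ (n + 1)]
  linear_combination -key

end

theorem stmt_1 (R : ℕ → ℚ) (h0 : R 0 = 0) (h1 : R 1 = 1)
    (hrec : ∀ n : ℕ, 2 ≤ n → (n : ℚ) * R n = R (n - 2) + ((n : ℚ) - 1) * R (n - 1)) :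
    ∀ n, R n = 1 - ∑ k ∈ Finset.range (n + 1), (-1 : ℚ) ^ k / (Nat.factorial k : ℚ) := by
  have hshift : ∀ n : ℕ, (n + 2 : ℚ) * R (n + 2) = R n + (n + 1) * R (n + 1) := by
    intro n
    have h := hrec (n + 2) (by omega)
    push_cast at h
    simpa [add_sub_assoc, show (2 : ℚ) - 1 = 1 by norm_num] using h
  refine congrFun (eq_of_two_step_recurrence ?_ ?_ hshift
    one_sub_sum_neg_one_pow_div_factorial_recurrence)
  · simp [h0]
  · simp [h1, sum_range_succ]
end

section
/- Let R : ℕ → ℝ satisfy R(0)=0, R(1)=1, and for n ≥ 2, R(n) = (1/n)·(1 + Σ_{k=0}^{n-2} R(k)). Then R(n) converges to 1 − e^{−1} as n → ∞. -/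
open Finset Filter

private noncomputable def Fpart (n : ℕ) : ℝ :=
  ∑ k ∈ Finset.range n, (-1 : ℝ) ^ k / (k + 1).factorial

private lemma Fpart_eq (n : ℕ) :
    Fpart n = 1 - ∑ k ∈ Finset.range (n + 1), (-1 : ℝ) ^ k / k.factorial := by
  induction n with
  | zero => simp [Fpart]
  | succ n ih =>
    rw [Fpart, Finset.sum_range_succ, ← Fpart, ih, Finset.sum_range_succ _ (n+1), Finset.sum_range_succ _ n, pow_succ]
    ring

theorem stmt_6 (R : ℕ → ℝ) (h0 : R 0 = 0) (h1 : R 1 = 1)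
    (hrec : ∀ n : ℕ, 2 ≤ n → R n = (1 / (n : ℝ)) * (1 + ∑ k ∈ Finset.range (n - 1), R k)) :
    Filter.Tendsto R Filter.atTop (nhds (1 - Real.exp (-1))) := by
  have key : ∀ n, R n = Fpart n ∧ R (n + 1) = Fpart (n + 1) := by
    intro n
    induction n with
    | zero => constructor <;> simp [h0, h1, Fpart]
    | succ n ih =>
      refine ⟨ih.2, ?_⟩
      rcases Nat.eq_zero_or_pos n with rfl | hn
      · have := hrec 2 le_rfl
        simp [h0] at this
        rw [this]
        simp [Fpart, Finset.sum_range_succ]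
        norm_num
      · have h2 : R (n + 2) = (1 / ((n : ℝ) + 2)) * (1 + ∑ k ∈ Finset.range (n + 1), R k) := by
          have := hrec (n + 2) (by omega)
          simpa using this
        have h3 : R (n + 1) = (1 / ((n : ℝ) + 1)) * (1 + ∑ k ∈ Finset.range n, R k) := by
          have := hrec (n + 1) (by omega)
          simpa using this
        have hpos1 : ((n : ℝ) + 1) ≠ 0 := by positivity
        have hpos2 : ((n : ℝ) + 2) ≠ 0 := by positivity
        have hs : (1 : ℝ) + ∑ k ∈ Finset.range n, R k = ((n : ℝ) + 1) * R (n + 1) := by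
          rw [h3]; field_simp
        have h4 : R (n + 2) = (1 / ((n : ℝ) + 2)) * (((n : ℝ) + 1) * R (n + 1) + R n) := by
          rw [h2, Finset.sum_range_succ, ← add_assoc, hs]
        rw [h4, ih.1, ih.2]
        -- now pure identity about Fpart
        have e1 : Fpart (n + 2) = Fpart (n + 1) + (-1 : ℝ) ^ (n + 1) / (n + 2).factorial := by
          simp [Fpart, Finset.sum_range_succ]
        have e2 : Fpart (n + 1) = Fpart n + (-1 : ℝ) ^ n / (n + 1).factorial := by
          simp [Fpart, Finset.sum_range_succ]
        have hfact : ((n + 2).factorial : ℝ) = ((n : ℝ) + 2) * (n + 1).factorial := by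
          rw [Nat.factorial_succ]; push_cast; ring
        have hfpos : ((n + 1).factorial : ℝ) ≠ 0 := by positivity
        rw [e1, e2, hfact, pow_succ]
        field_simp
        ring
  have hR : ∀ n, R n = Fpart n := fun n => (key n).1
  have hexp : Tendsto (fun n => ∑ k ∈ Finset.range n, (-1 : ℝ) ^ k / k.factorial) atTop
      (nhds (Real.exp (-1))) := by
    have h := (NormedSpace.expSeries_div_summable (-1 : ℝ)).hasSum.tendsto_sum_nat
    rw [Real.exp_eq_exp_ℝ, NormedSpace.exp_eq_tsum_div]
    exact ((NormedSpace.expSeries_div_summable (-1 : ℝ)).hasSum).tendsto_sum_nat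
  have hexp' : Tendsto (fun n => ∑ k ∈ Finset.range (n + 1), (-1 : ℝ) ^ k / k.factorial) atTop
      (nhds (Real.exp (-1))) := hexp.comp (tendsto_add_atTop_nat 1)
  have : Tendsto Fpart atTop (nhds (1 - Real.exp (-1))) :=
    (tendsto_const_nhds.sub hexp').congr fun n => (Fpart_eq n).symm
  exact this.congr (fun n => (hR n).symm)
end

section
/- Let R : ℕ → ℚ satisfy R(0)=0, R(1)=1, and n·R(n) = R(n-2) + (n-1)·R(n-1) for n ≥ 2, and define D(n) = 1 − R(n). Then D(n) equals the probability that a uniformly random permutation of an n-element set has no fixed points, i.e., D(n) = (number of derangements of n)/n!. -/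
theorem stmt_7 (R : ℕ → ℚ) (h0 : R 0 = 0) (h1 : R 1 = 1)
    (hrec : ∀ n : ℕ, 2 ≤ n → (n : ℚ) * R n = R (n - 2) + ((n : ℚ) - 1) * R (n - 1))
    (D : ℕ → ℚ) (hD : ∀ n, D n = 1 - R n) :
    ∀ n, D n = (numDerangements n : ℚ) / (Nat.factorial n : ℚ) := by
  have key : ∀ n, D n = (numDerangements n : ℚ) / (Nat.factorial n : ℚ) ∧
      D (n+1) = (numDerangements (n+1) : ℚ) / (Nat.factorial (n+1) : ℚ) := by
    intro n
    induction n with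
    | zero =>
      simp [hD, h0, h1, numDerangements_zero, numDerangements_one]
    | succ n ih =>
      refine ⟨ih.2, ?_⟩
      have hr := hrec (n+2) (by omega)
      have hstep : ((n:ℚ)+2) * D (n+2) = D n + ((n:ℚ)+1) * D (n+1) := by
        simp only [hD] at *
        push_cast at hr
        ring_nf at hr ⊢
        linarith
      have h1' := ih.1; have h2' := ih.2
      have hfac : (Nat.factorial (n+2) : ℚ) = ((n:ℚ)+2) * ((n:ℚ)+1) * (Nat.factorial n : ℚ) := by
        rw [Nat.factorial_succ, Nat.factorial_succ]; push_cast; ring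
      have hfac1 : (Nat.factorial (n+1) : ℚ) = ((n:ℚ)+1) * (Nat.factorial n : ℚ) := by
        rw [Nat.factorial_succ]; push_cast; ring
      have hder : (numDerangements (n+2) : ℚ) =
          ((n:ℚ)+1) * ((numDerangements n : ℚ) + (numDerangements (n+1) : ℚ)) := by
        rw [numDerangements_add_two]; push_cast; ring
      have hfn : (Nat.factorial n : ℚ) ≠ 0 := by
        exact_mod_cast Nat.factorial_ne_zero n
      have hn2 : ((n:ℚ)+2) ≠ 0 := by positivity
      have hn1 : ((n:ℚ)+1) ≠ 0 := by positivity
      have : D (n+2) = (D n + ((n:ℚ)+1) * D (n+1)) / ((n:ℚ)+2) := by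
        field_simp at hstep ⊢; linarith
      rw [this, h1', h2', hder, hfac, hfac1]
      field_simp
  exact fun n => (key n).1
end
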